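/- Let G be a finite nilpotent group with Sylow subgroups P_1, ..., P_r, and let x ∈ G have Sylow decomposition x = x_1 ··· x_r with x_i ∈ P_i. Then ⟨x⟩ is a maximal cyclic subgroup of G if and only if ⟨x_i⟩ is a maximal cyclic subgroup of P_i for every i ∈ [r]. -/

import Mathlib

/-- The power graph of a group: distinct `x` and `y` are adjacent iff one is a
positive power of the other. -/
def powerGraph (G : Type*) [Group G] : SimpleGraph G where
  Adj x y := x ≠ y ∧ ((∃ k : ℕ, 0 < k ∧ x = y ^ k) ∨ (∃ k : ℕ, 0 < k ∧ y = x ^ k))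
  symm := by
    refine ⟨?_⟩
    intro x y h
    exact ⟨h.1.symm, h.2.symm⟩
  loopless := by
    refine ⟨?_⟩
    intro x h
    exact h.1 rfl

noncomputable instance powerGraphDecidableAdj (G : Type*) [Group G] :
    DecidableRel (powerGraph G).Adj :=
  Classical.decRel _

/-- The vertex connectivity of a finite graph: the minimum number of vertices whose
deletion yields a disconnected graph or a graph with exactly one vertex. -/
noncomputable def vertexConnectivity {V : Type*} [Fintype V] (Γ : SimpleGraph V) : ℕ :=
  sInf {n | ∃ S : Finset V, S.card = n ∧
    (¬ (SimpleGraph.induce ((↑S : Set V)ᶜ) Γ).Preconnected ∨ ((↑S : Set V)ᶜ).ncard = 1)}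

/-- A subgroup is a maximal cyclic subgroup if it is cyclic and not properly contained
in any cyclic subgroup. -/
def IsMaximalCyclic {G : Type*} [Group G] (M : Subgroup G) : Prop :=
  IsCyclic ↥M ∧ ∀ N : Subgroup G, IsCyclic ↥N → M ≤ N → M = N

/-- `K` is a maximal cyclic subgroup of the subgroup `H`. -/
def IsMaximalCyclicIn {G : Type*} [Group G] (H K : Subgroup G) : Prop :=
  IsCyclic ↥K ∧ K ≤ H ∧ ∀ N : Subgroup G, IsCyclic ↥N → N ≤ H → K ≤ N → K = N

/-- A generalized quaternion group: a dicyclic group `Q_{4n}` with `n ≥ 2` a power of 2. -/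
def IsGeneralizedQuaternion (G : Type*) [Group G] : Prop :=
  ∃ n : ℕ, 2 ≤ n ∧ (∃ k : ℕ, n = 2 ^ k) ∧ Nonempty (G ≃* QuaternionGroup n)

/-!
Multiplying the Sylow subgroups together is an isomorphism `∏ i, P i ≃* G`, so it suffices to
work in a product of finite groups `H i` of pairwise coprime orders. There, for
`k ≡ 1 [MOD |H i|]` with `|H j| ∣ k` for all `j ≠ i`, the power `v ^ k` is the `i`-th component of
`v`; hence `u ∈ ⟨v⟩` iff `u i ∈ ⟨v i⟩` for every `i`. Maximality of `⟨u⟩` among cyclic subgroups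
is maximality of `u` for this preorder, and a tuple is maximal for a componentwise preorder iff
each of its components is.
-/

theorem Finset.noncommProd_univ_fin {M : Type*} [Monoid M] {n : ℕ} (f : Fin n → M) (comm) :
    univ.noncommProd f comm = (List.ofFn f).prod := by
  simp [Finset.noncommProd, Fin.univ_val_map]

theorem Nat.factorization_prod_pow_apply {ι : Type*} [Fintype ι] {p α : ι → ℕ}
    (hp : ∀ i, (p i).Prime) (hinj : Function.Injective p) (i : ι) :
    (∏ j, p j ^ α j).factorization (p i) = α i := by
  simp only [Nat.factorization_prod fun j _ => pow_ne_zero _ (hp j).ne_zero, Finsupp.coe_finsetSum,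
    Finset.sum_apply, (hp _).factorization_pow, Finsupp.single_apply]
  rw [Finset.sum_eq_single i (fun j _ hji => if_neg (hinj.ne hji)) (by simp), if_pos rfl]

open Subgroup

section MaximalCyclic

variable {G : Type*} [Group G]

theorem isMaximalCyclic_zpowers_iff (x : G) :
    IsMaximalCyclic (zpowers x) ↔ ∀ y : G, x ∈ zpowers y → y ∈ zpowers x := by
  refine ⟨fun h y hxy => ?_, fun h => ⟨inferInstance, fun N hN hle => ?_⟩⟩
  · rw [h.2 _ inferInstance (zpowers_le.2 hxy)]
    exact mem_zpowers y
  · obtain ⟨y, rfl⟩ := N.isCyclic_iff_exists_zpowers_eq_top.1 hN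
    exact le_antisymm hle (zpowers_le.2 (h y (zpowers_le.1 hle)))

theorem mem_zpowers_map_iff {N F : Type*} [Group N] [FunLike F G N] [MonoidHomClass F G N]
    {f : F} (hf : Function.Injective f) {x y : G} : f x ∈ zpowers (f y) ↔ x ∈ zpowers y := by
  rw [← MonoidHom.coe_coe f, ← MonoidHom.map_zpowers, mem_map_iff_mem hf]

theorem isMaximalCyclic_zpowers_mulEquiv_iff {N : Type*} [Group N] (e : G ≃* N) (x : G) :
    IsMaximalCyclic (zpowers (e x)) ↔ IsMaximalCyclic (zpowers x) := by
  simp only [isMaximalCyclic_zpowers_iff, e.surjective.forall,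
    mem_zpowers_map_iff e.injective]

theorem isMaximalCyclicIn_zpowers_iff {H : Subgroup G} (x : H) :
    IsMaximalCyclicIn H (zpowers (x : G)) ↔ IsMaximalCyclic (zpowers x) := by
  simp only [isMaximalCyclic_zpowers_iff, ← mem_zpowers_map_iff H.subtype_injective, coe_subtype]
  refine ⟨fun h y hxy => ?_, fun h => ⟨inferInstance, zpowers_le.2 x.2, fun N hN hNH hle => ?_⟩⟩
  · rw [h.2.2 _ inferInstance (zpowers_le.2 y.2) (zpowers_le.2 hxy)]
    exact mem_zpowers _
  · obtain ⟨y, rfl⟩ := N.isCyclic_iff_exists_zpowers_eq_top.1 hN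
    exact le_antisymm hle (zpowers_le.2 (h ⟨y, hNH (mem_zpowers y)⟩ (zpowers_le.1 hle)))

end MaximalCyclic

section Pi

variable {ι : Type*} [Fintype ι] [DecidableEq ι] {H : ι → Type*} [∀ i, Group (H i)]
  [∀ i, Finite (H i)]

theorem exists_pow_eq_mulSingle_of_coprime
    (hcop : Pairwise fun i j => (Nat.card (H i)).Coprime (Nat.card (H j))) (i : ι) :
    ∃ k : ℕ, ∀ v : ∀ j, H j, v ^ k = Pi.mulSingle i (v i) := by
  set N := ∏ j ∈ Finset.univ.erase i, Nat.card (H j)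
  refine ⟨N ^ (Nat.card (H i)).totient, fun v => funext fun j => ?_⟩
  rcases eq_or_ne j i with rfl | hji
  · have hk : N ^ (Nat.card (H j)).totient ≡ 1 [MOD Nat.card (H j)] :=
      Nat.ModEq.pow_totient (Nat.Coprime.prod_left fun l hl => hcop (Finset.ne_of_mem_erase hl))
    rw [Pi.pow_apply, Pi.mulSingle_eq_same, ← pow_one (v j), ← pow_mul, one_mul,
      pow_eq_pow_iff_modEq]
    exact hk.of_dvd (orderOf_dvd_natCard (v j))
  · have hdvd : Nat.card (H j) ∣ N ^ (Nat.card (H i)).totient :=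
      (Finset.dvd_prod_of_mem _ (Finset.mem_erase.2 ⟨hji, Finset.mem_univ _⟩)).trans
        (dvd_pow_self N (Nat.totient_pos.2 Nat.card_pos).ne')
    rw [Pi.pow_apply, Pi.mulSingle_eq_of_ne hji]
    exact orderOf_dvd_iff_pow_eq_one.1 ((orderOf_dvd_natCard (v j)).trans hdvd)

theorem mem_zpowers_pi_iff
    (hcop : Pairwise fun i j => (Nat.card (H i)).Coprime (Nat.card (H j))) {u v : ∀ i, H i} :
    u ∈ zpowers v ↔ ∀ i, u i ∈ zpowers (v i) := by
  refine ⟨fun h i => ?_, fun h => pi_mem_of_mulSingle_mem u fun i => ?_⟩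
  · obtain ⟨m, rfl⟩ := mem_zpowers_iff.1 h
    exact mem_zpowers_iff.2 ⟨m, rfl⟩
  · obtain ⟨k, hk⟩ := exists_pow_eq_mulSingle_of_coprime hcop i
    obtain ⟨m, hm⟩ := mem_zpowers_iff.1 (h i)
    refine mem_zpowers_iff.2 ⟨k * m, ?_⟩
    rw [zpow_mul, zpow_natCast, hk, ← Pi.mulSingle_zpow, hm]

theorem isMaximalCyclic_zpowers_pi_iff
    (hcop : Pairwise fun i j => (Nat.card (H i)).Coprime (Nat.card (H j))) (u : ∀ i, H i) :
    IsMaximalCyclic (zpowers u) ↔ ∀ i, IsMaximalCyclic (zpowers (u i)) := by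
  simp only [isMaximalCyclic_zpowers_iff, mem_zpowers_pi_iff hcop]
  refine ⟨fun h i w hw => ?_, fun h v hv i => h i (v i) (hv i)⟩
  have := h (Function.update u i w) fun j => ?_
  · simpa using this i
  · rcases eq_or_ne j i with rfl | hji
    · simpa using hw
    · simp [hji]

end Pi

theorem Subgroup.bijective_noncommPiCoprod_of_coprime {G : Type*} [Group G] [Finite G]
    {ι : Type*} [Fintype ι] {P : ι → Subgroup G}
    (hcomm : Pairwise fun i j => ∀ x y : G, x ∈ P i → y ∈ P j → Commute x y)
    (hcop : Pairwise fun i j => (Nat.card (P i)).Coprime (Nat.card (P j)))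
    (hcard : ∏ i, Nat.card (P i) = Nat.card G) : Function.Bijective (noncommPiCoprod hcomm) := by
  have : ∀ i, Fintype (P i) := fun i => Fintype.ofFinite _
  have hind : iSupIndep P :=
    independent_of_coprime_order hcomm (by simpa only [Nat.card_eq_fintype_card] using hcop)
  exact (injective_noncommPiCoprod_of_iSupIndep hind).bijective_of_nat_card_le
    (by rw [Nat.card_pi, hcard])

theorem maximal_cyclic_iff_components_maximal_cyclic_general
    {G : Type*} [Group G] [Fintype G] (hnil : Group.IsNilpotent G)
    (r : ℕ) (p α : Fin r → ℕ) (P : Fin r → Subgroup G)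
    (hp : ∀ i, (p i).Prime) (hmono : StrictMono p)
    (hcard : Fintype.card G = ∏ i, p i ^ α i)
    (hP : ∀ i, Nat.card ↥(P i) = p i ^ α i)
    (x : G) (xc : Fin r → G) (hxc : ∀ i, xc i ∈ P i)
    (hxprod : x = (List.ofFn xc).prod) :
    IsMaximalCyclic (Subgroup.zpowers x) ↔
      ∀ i, IsMaximalCyclicIn (P i) (Subgroup.zpowers (xc i)) := by
  have := hnil
  have hinj := hmono.injective
  rw [← Nat.card_eq_fintype_card] at hcard
  have hcop : Pairwise fun i j => (Nat.card (P i)).Coprime (Nat.card (P j)) := by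
    intro i j hij
    rw [hP, hP]
    exact Nat.Coprime.pow _ _ ((Nat.coprime_primes (hp i) (hp j)).2 (hinj.ne hij))
  have hnormal (i : Fin r) : (P i).Normal := by
    have : Fact (p i).Prime := ⟨hp i⟩
    let S := Sylow.ofCard (P i) (by rw [hP, hcard, Nat.factorization_prod_pow_apply hp hinj])
    exact inferInstanceAs (S : Subgroup G).Normal
  have hcomm : Pairwise fun i j => ∀ a b : G, a ∈ P i → b ∈ P j → Commute a b :=
    fun i j hij => commute_of_normal_of_disjoint _ _ (hnormal i) (hnormal j)
      (disjoint_of_coprime_natCard (hcop hij))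
  let e := MulEquiv.ofBijective _
    (bijective_noncommPiCoprod_of_coprime hcomm hcop (by simp only [hP, hcard]))
  let u : ∀ i, P i := fun i => ⟨xc i, hxc i⟩
  have hx : x = e u := by
    rw [hxprod, MulEquiv.ofBijective_apply, noncommPiCoprod_apply]
    exact (Finset.noncommProd_univ_fin _ _).symm
  rw [hx, isMaximalCyclic_zpowers_mulEquiv_iff, isMaximalCyclic_zpowers_pi_iff hcop]
  exact forall_congr' fun i => (isMaximalCyclicIn_zpowers_iff (u i)).symm

/-- `⟨x⟩` is a maximal cyclic subgroup of a finite nilpotent group `G` iff each Sylow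
component `⟨x_i⟩` is a maximal cyclic subgroup of the Sylow subgroup `P i`. -/
theorem maximal_cyclic_iff_components_maximal_cyclic
    {G : Type*} [Group G] [Fintype G] (hnil : Group.IsNilpotent G)
    (r : ℕ) (p α : Fin r → ℕ) (P : Fin r → Subgroup G)
    (hp : ∀ i, (p i).Prime) (hmono : StrictMono p) (hα : ∀ i, 1 ≤ α i)
    (hcard : Fintype.card G = ∏ i, p i ^ α i)
    (hP : ∀ i, Nat.card ↥(P i) = p i ^ α i)
    (x : G) (xc : Fin r → G) (hxc : ∀ i, xc i ∈ P i)
    (hxprod : x = (List.ofFn xc).prod) :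
    IsMaximalCyclic (Subgroup.zpowers x) ↔
      ∀ i, IsMaximalCyclicIn (P i) (Subgroup.zpowers (xc i)) :=
  maximal_cyclic_iff_components_maximal_cyclic_general hnil r p α P hp hmono hcard hP x xc hxc
    hxprod
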